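/- arXiv:2511.23218 — 2 statements merged into one kernel-verified Lean document; each statement's English description precedes it below -/
import Mathlib

section
/- For the one-dimensional lattice with 3×3 Bloch Hamiltonian H(k) = H₀ + e^{−ik} H₁ + e^{ik} H₁†, where H₀ has entries H₀[1,3] = e^{iφ}, H₀[2,3] = e^{−iφ}, H₀[3,1] = e^{−iφ}, H₀[3,2] = e^{iφ} (others zero) and H₁ has entries H₁[1,1] = e^{−iφ}, H₁[2,2] = e^{iφ}, H₁[1,3] = H₁[2,3] = 1 (others zero), the number E = −2 is an eigenvalue of H(k) for every real k and every real φ, i.e., det(H(k) + 2I) = 0 for all k. -/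
/-! Write `u = e^{iφ} + e^{-ik}` and `v = e^{-iφ} + e^{-ik}`. Since all phases have modulus one,
`H(k) + 2` is the matrix `!![u ū, 0, u; 0, v v̄, v; ū, v̄, 2]`, whose determinant vanishes
identically: `(-1/ū, -1/v̄, 1)` spans its kernel whenever `u, v ≠ 0`. -/

open Matrix Complex

noncomputable def dH0 (φ : ℝ) : Matrix (Fin 3) (Fin 3) ℂ :=
  !![0, 0, exp (I * φ);
     0, 0, exp (-(I * φ));
     exp (-(I * φ)), exp (I * φ), 0]

noncomputable def dH1 (φ : ℝ) : Matrix (Fin 3) (Fin 3) ℂ :=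
  !![exp (-(I * φ)), 0, 1;
     0, exp (I * φ), 1;
     0, 0, 0]

noncomputable def dBloch (φ k : ℝ) : Matrix (Fin 3) (Fin 3) ℂ :=
  dH0 φ + exp (-(I * k)) • dH1 φ + exp (I * k) • (dH1 φ)ᴴ

open ComplexConjugate

theorem det_arrowhead_fin_three_eq_zero {R : Type*} [CommRing R] (p q r s : R) :
    det !![p * q, 0, p; 0, r * s, r; q, s, 2] = 0 := by
  rw [det_fin_three]
  simp only [of_apply, cons_val', cons_val_zero, cons_val_one, cons_val_two, empty_val',
    cons_val_fin_one, head_cons, tail_cons, head_fin_const]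
  ring

lemma conj_exp_I_mul (x : ℝ) : conj (exp (I * x)) = exp (-(I * x)) := by
  rw [← Complex.exp_conj, map_mul, conj_I, conj_ofReal, neg_mul]

lemma conj_exp_neg_I_mul (x : ℝ) : conj (exp (-(I * x))) = exp (I * x) := by
  rw [← conj_exp_I_mul, conj_conj]

lemma dBloch_add_two_smul_one (φ k : ℝ) :
    dBloch φ k + 2 • (1 : Matrix (Fin 3) (Fin 3) ℂ) =
      let u := exp (I * φ) + exp (-(I * k))
      let v := exp (-(I * φ)) + exp (-(I * k))
      !![u * conj u, 0, u; 0, v * conj v, v; conj u, conj v, 2] := by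
  have hφ : exp (I * φ) * exp (-(I * φ)) = 1 := by rw [← exp_add, add_neg_cancel, exp_zero]
  have hk : exp (I * k) * exp (-(I * k)) = 1 := by rw [← exp_add, add_neg_cancel, exp_zero]
  ext i j
  fin_cases i <;> fin_cases j <;>
    simp [dBloch, dH0, dH1, conj_exp_I_mul, conj_exp_neg_I_mul, ofNat_apply] <;>
    linear_combination -hφ - hk

theorem stmt_14 (φ k : ℝ) :
    det (dBloch φ k + 2 • (1 : Matrix (Fin 3) (Fin 3) ℂ)) = 0 := by
  rw [dBloch_add_two_smul_one]
  exact det_arrowhead_fin_three_eq_zero _ _ _ _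
end

section
/- The 3×3 Bloch Hamiltonian of the chiral diamond chain, H(k) with H₀ = [[0,0,1],[0,0,1],[1,1,0]] and H₁ having H₁[1,3] = H₁[2,3] = 1 (others zero), i.e., H(k) = H₀ + e^{−ik}H₁ + e^{ik}H₁†, has eigenvalues 0, 2√(1+cos k), and −2√(1+cos k) for every real k. -/
/-!
`H(k)` is chiral: it has the block form `[[0, v], [v†, 0]]` with `v = a • (1, 1)` and
`a = 1 + e^{-ik}`. Its characteristic polynomial is therefore `μ (μ² - ‖v‖²)` with
`‖v‖² = 2 |a|² = 4 (1 + cos k)`, which gives the flat band `0` and the two bands `±2√(1 + cos k)`.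
-/

open Matrix Complex

def cH0 : Matrix (Fin 3) (Fin 3) ℂ := !![0, 0, 1; 0, 0, 1; 1, 1, 0]

def cH1 : Matrix (Fin 3) (Fin 3) ℂ := !![0, 0, 1; 0, 0, 1; 0, 0, 0]

noncomputable def cBloch (k : ℝ) : Matrix (Fin 3) (Fin 3) ℂ :=
  cH0 + exp (-(I * k)) • cH1 + exp (I * k) • cH1ᴴ

def diamondMatrix (a : ℂ) : Matrix (Fin 3) (Fin 3) ℂ :=
  !![0, 0, a; 0, 0, a; star a, star a, 0]

lemma det_scalar_sub_diamondMatrix (a μ : ℂ) :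
    (scalar (Fin 3) μ - diamondMatrix a).det = μ * (μ ^ 2 - 2 * normSq a) := by
  rw [normSq_eq_conj_mul_self]
  simp only [scalar_apply, diamondMatrix, RCLike.star_def, det_fin_three, Fin.isValue,
    Matrix.sub_apply, diagonal_apply_eq, of_apply, cons_val', cons_val_zero, cons_val_fin_one,
    sub_zero, cons_val_one, cons_val, ne_eq, Fin.reduceEq, not_false_eq_true, diagonal_apply_ne,
    zero_sub, mul_neg, neg_mul, neg_neg, zero_ne_one, sub_self, one_ne_zero, mul_zero, zero_mul,
    neg_zero, add_zero]
  ring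

lemma spectrum_diamondMatrix {a r : ℂ} (hr : r ^ 2 = 2 * normSq a) :
    spectrum ℂ (diamondMatrix a) = {0, r, -r} := by
  ext μ
  have hdet : (scalar (Fin 3) μ - diamondMatrix a).det = μ * (μ - r) * (μ + r) := by
    rw [det_scalar_sub_diamondMatrix, ← hr]; ring
  rw [spectrum.mem_iff, isUnit_iff_isUnit_det, isUnit_iff_ne_zero, not_not, algebraMap_eq_diagonal]
  change (scalar (Fin 3) μ - diamondMatrix a).det = 0 ↔ _
  simp only [hdet, mul_eq_zero, sub_eq_zero, add_eq_zero_iff_eq_neg, Set.mem_insert_iff,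
    Set.mem_singleton_iff, or_assoc]

lemma cBloch_eq_diamondMatrix (k : ℝ) : cBloch k = diamondMatrix (1 + exp (-(I * k))) := by
  have hstar : star (1 + exp (-(I * k))) = 1 + exp (I * k) := by
    simp [← exp_conj]
  rw [diamondMatrix, hstar]
  ext i j
  fin_cases i <;> fin_cases j <;> simp [cBloch, cH0, cH1, add_comm]

lemma normSq_one_add_exp_neg_mul_I (k : ℝ) :
    normSq (1 + exp (-(I * k))) = 2 * (1 + Real.cos k) := by
  simp only [normSq_apply, add_re, one_re, exp_re, neg_re, mul_re, I_re, ofReal_re, zero_mul,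
    I_im, ofReal_im, mul_zero, sub_self, neg_zero, Real.exp_zero, neg_im, mul_im, one_mul,
    zero_add, Real.cos_neg, add_im, one_im, exp_im, Real.sin_neg, mul_neg, neg_mul, neg_neg]
  linear_combination Real.sin_sq_add_cos_sq k

theorem stmt_16 (k : ℝ) :
    spectrum ℂ (cBloch k) =
      {(0 : ℂ), (2 * Real.sqrt (1 + Real.cos k) : ℂ),
       (-(2 * Real.sqrt (1 + Real.cos k)) : ℂ)} := by
  rw [cBloch_eq_diamondMatrix]
  apply spectrum_diamondMatrix
  have hcos : 0 ≤ 1 + Real.cos k := by linarith [Real.neg_one_le_cos k]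
  rw [normSq_one_add_exp_neg_mul_I, mul_pow, ← ofReal_pow, Real.sq_sqrt hcos]
  push_cast
  ring
end
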